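/- Let x ∈ ℝ, δ > 0, L > 0, and let h : ℝ → ℝ be continuous with |h(x₁) − h(x₂)| ≤ L|x₁ − x₂| for all x₁, x₂ ∈ [x − δ, x + δ]. Define a₀,δ(x) := 2∫₀¹ h(x + δ sin(2πs)) ds and ε₂(x, t) := ∫₀^t [h(x + δ sin(2πτ)) − a₀,δ(x)/2] dτ for t ≥ 0. Then |ε₂(x, t)| ≤ 2Lδ for all t ≥ 0. (Bound on the zeroth-order averaging error used in the proof of Theorem 1 for the high-pass-filter channel.) -/

import Mathlib

/-!
The integrand `τ ↦ h (x + δ sin (2πτ)) - a₀,δ(x)/2` is 1-periodic with zero mean, so its integral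
over `[0, t]` equals its integral over the last incomplete period, an interval of length `< 1`.
On the other hand the orbit `x + δ sin (2πτ)` stays in `[x - δ, x + δ]`, where `h` oscillates by
at most `2Lδ`; the mean `a₀,δ(x)/2` of `h` along the orbit is an average of such values, so the
integrand is bounded by `2Lδ`.
-/

open MeasureTheory Real

noncomputable def a0 (h : ℝ → ℝ) (δ x : ℝ) : ℝ :=
  2 * ∫ s in (0:ℝ)..1, h (x + δ * Real.sin (2 * Real.pi * s))

namespace Function.Periodic

variable {E : Type*} [NormedAddCommGroup E] [NormedSpace ℝ E] {f : ℝ → E} {T M : ℝ}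

theorem norm_intervalIntegral_le_of_integral_period_eq_zero (hf : Periodic f T) (hT : 0 < T)
    (h_int : IntervalIntegrable f volume 0 T) (h₀ : ∫ x in 0..T, f x = 0)
    (hM : ∀ x, ‖f x‖ ≤ M) (t : ℝ) :
    ‖∫ x in 0..t, f x‖ ≤ M * T := by
  have h_int' := hf.intervalIntegrable₀ hT.ne' h_int
  set ε := Int.fract (t / T) * T
  obtain ⟨hε₀, hεT⟩ := Int.fract_div_mul_self_mem_Ico T t hT
  have h_last : ∫ x in 0..t, f x = ∫ x in 0..ε, f x := by
    rw [← Int.fract_div_mul_self_add_zsmul_eq T t hT.ne',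
      ← intervalIntegral.integral_add_adjacent_intervals (h_int' 0 ε) (h_int' _ _),
      hf.intervalIntegral_add_zsmul_eq _ ε h_int', hf.intervalIntegral_add_eq ε 0, zero_add, h₀,
      smul_zero, add_zero]
  have hM₀ : 0 ≤ M := (norm_nonneg _).trans (hM 0)
  calc ‖∫ x in 0..t, f x‖ = ‖∫ x in 0..ε, f x‖ := by rw [h_last]
    _ ≤ M * |ε - 0| := intervalIntegral.norm_integral_le_of_norm_le_const fun x _ ↦ hM x
    _ ≤ M * T := by rw [sub_zero, abs_of_nonneg hε₀]; gcongr

end Function.Periodic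

theorem norm_sub_intervalIntegral_unit_le {E : Type*} [NormedAddCommGroup E] [NormedSpace ℝ E]
    [CompleteSpace E] {f : ℝ → E} {c : E} {M : ℝ} (hf : IntervalIntegrable f volume 0 1)
    (hM : ∀ s, ‖c - f s‖ ≤ M) :
    ‖c - ∫ s in (0:ℝ)..1, f s‖ ≤ M := by
  have hc : c - ∫ s in (0:ℝ)..1, f s = ∫ s in (0:ℝ)..1, (c - f s) := by
    rw [intervalIntegral.integral_sub intervalIntegrable_const hf, intervalIntegral.integral_const,
      sub_zero, one_smul]
  simpa [hc] using intervalIntegral.norm_integral_le_of_norm_le_const (a := 0) (b := 1)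
    fun s _ ↦ hM s

theorem add_mul_sin_mem_Icc (x θ : ℝ) {δ : ℝ} (hδ : 0 ≤ δ) :
    x + δ * sin θ ∈ Set.Icc (x - δ) (x + δ) := by
  constructor <;> nlinarith [neg_one_le_sin θ, sin_le_one θ]

theorem periodic_sin_two_pi_mul : Function.Periodic (fun τ ↦ sin (2 * π * τ)) 1 := by
  intro τ
  simp only [mul_add, mul_one, sin_add_two_pi]

/-- Bound on the zeroth-order averaging error used in the proof of Theorem 1 for the
high-pass-filter channel. -/
theorem stmt17
    (x δ L : ℝ) (hδ : 0 < δ) (hL : 0 < L)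
    (h : ℝ → ℝ) (hc : Continuous h)
    (hLip : ∀ x₁ ∈ Set.Icc (x - δ) (x + δ), ∀ x₂ ∈ Set.Icc (x - δ) (x + δ),
      |h x₁ - h x₂| ≤ L * |x₁ - x₂|)
    (eps2 : ℝ → ℝ)
    (heps2 : ∀ t : ℝ, eps2 t =
      ∫ τ in (0:ℝ)..t, (h (x + δ * Real.sin (2 * Real.pi * τ)) - a0 h δ x / 2)) :
    ∀ t : ℝ, 0 ≤ t → |eps2 t| ≤ 2 * L * δ := by
  intro t _
  set u : ℝ → ℝ := fun τ ↦ h (x + δ * sin (2 * π * τ))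
  have hu : Continuous u := by fun_prop
  have hmean : a0 h δ x / 2 = ∫ s in (0:ℝ)..1, u s := by simp [a0, u]
  have hosc : ∀ σ τ, |u σ - u τ| ≤ 2 * L * δ := fun σ τ ↦ by
    have hσ := add_mul_sin_mem_Icc x (2 * π * σ) hδ.le
    have hτ := add_mul_sin_mem_Icc x (2 * π * τ) hδ.le
    have hdist : |_ - _| ≤ _ := Real.dist_le_of_mem_Icc hσ hτ
    calc |u σ - u τ| ≤ L * |_ - _| := hLip _ hσ _ hτ
      _ ≤ L * (x + δ - (x - δ)) := mul_le_mul_of_nonneg_left hdist hL.le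
      _ = 2 * L * δ := by ring
  have hper : Function.Periodic (fun τ ↦ u τ - a0 h δ x / 2) 1 := fun τ ↦ by
    simp only [u, periodic_sin_two_pi_mul τ]
  rw [heps2, ← Real.norm_eq_abs, ← mul_one (2 * L * δ)]
  refine hper.norm_intervalIntegral_le_of_integral_period_eq_zero one_pos
    ((hu.sub continuous_const).intervalIntegrable 0 1) ?_ (fun τ ↦ ?_) t
  · rw [intervalIntegral.integral_sub (hu.intervalIntegrable 0 1) intervalIntegrable_const,
      intervalIntegral.integral_const, hmean]
    simp
  · rw [hmean]
    exact norm_sub_intervalIntegral_unit_le (hu.intervalIntegrable 0 1) (hosc τ)
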